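/- arXiv:2005.06905 — 2 statements merged into one kernel-verified Lean document; each statement's English description precedes it below -/
import Mathlib

section
/- For every t with max(0, T − 1/e) < t < T, the quantity b_t := (1/λ_t)·∫₀ᵗ ∫₀ˢ (T−s)^{2α−2}(T−u)^{−2α} du ds satisfies the exact identity b_t = 1 + log(T)/|log(T−t)| − (1/((2α−1)|log(T−t)|))·(1 − ((T−t)/T)^{2α−1}). -/
open MeasureTheory Real Filter Topology

/-- `λ_t := |log(T−t)|/(2α−1)`. -/
noncomputable def lam (T α t : ℝ) : ℝ := |Real.log (T - t)| / (2 * α - 1)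

/-- The kernel `f_t`. -/
noncomputable def fker (T α t : ℝ) (u v : ℝ) : ℝ :=
  if u ∈ Set.Icc (0:ℝ) t ∧ v ∈ Set.Icc (0:ℝ) t then
    (1 / (2 * Real.sqrt (lam T α t))) * (T - max u v) ^ (α - 1) * (T - min u v) ^ (-α)
  else 0

/-- The kernel `g_t`. -/
noncomputable def gker (T α t : ℝ) (u v : ℝ) : ℝ :=
  if u ∈ Set.Icc (0:ℝ) t ∧ v ∈ Set.Icc (0:ℝ) t then
    (T - u) ^ (-α) * (T - v) ^ (-α) *
      ((T - max u v) ^ (2 * α - 1) - (T - t) ^ (2 * α - 1)) / |Real.log (T - t)|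
  else 0

/-- `⟨p,q⟩ := ∫_{[0,T]²} p(u,v) q(u,v) du dv`. -/
noncomputable def ip (T : ℝ) (p q : ℝ → ℝ → ℝ) : ℝ :=
  ∫ u in Set.Icc (0:ℝ) T, ∫ v in Set.Icc (0:ℝ) T, p u v * q u v

/-- `‖p‖² := ⟨p,p⟩`. -/
noncomputable def normSq (T : ℝ) (p : ℝ → ℝ → ℝ) : ℝ := ip T p p

/-- The contraction `(p ⊗₁ q)(x,y) := ∫₀^T p(x,u) q(y,u) du`. -/
noncomputable def contr (T : ℝ) (p q : ℝ → ℝ → ℝ) : ℝ → ℝ → ℝ :=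
  fun x y => ∫ u in Set.Icc (0:ℝ) T, p x u * q y u

/-- `b_t := (1/λ_t)·∫₀ᵗ ∫₀ˢ (T−s)^{2α−2}(T−u)^{−2α} du ds`. -/
noncomputable def bfun (T α t : ℝ) : ℝ :=
  (1 / lam T α t) *
    ∫ s in (0:ℝ)..t, ∫ u in (0:ℝ)..s, (T - s) ^ (2 * α - 2) * (T - u) ^ (-(2 * α))

/-- `A_{t,1}`. -/
noncomputable def A1 (T α t : ℝ) : ℝ :=
  (1 / (lam T α t) ^ 2) *
    ∫ x4 in (0:ℝ)..t, ∫ x3 in (0:ℝ)..x4, ∫ x2 in (0:ℝ)..x3, ∫ x1 in (0:ℝ)..x2,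
      (T - x4) ^ (2 * α - 2) * (T - x3) ^ (-1 : ℝ) * (T - x2) ^ (-1 : ℝ) *
        (T - x1) ^ (-(2 * α))

/-- `A_{t,2}`. -/
noncomputable def A2 (T α t : ℝ) : ℝ :=
  (1 / (2 * (lam T α t) ^ 2)) *
    ∫ x4 in (0:ℝ)..t, ∫ x2 in (0:ℝ)..x4, ∫ x3 in (0:ℝ)..x2, ∫ x1 in (0:ℝ)..x3,
      (T - x4) ^ (2 * α - 2) * (T - x2) ^ (2 * α - 2) * (T - x3) ^ (-(2 * α)) *
        (T - x1) ^ (-(2 * α))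

section IntegralsOfPowersOfDistance

variable {a b c : ℝ}

lemma intervalIntegrable_sub_rpow (r : ℝ) (ha : a < c) (hb : b < c) :
    IntervalIntegrable (fun u => (c - u) ^ r) volume a b :=
  (ContinuousOn.rpow_const (continuousOn_const.sub continuousOn_id) fun _ hu =>
    Or.inl (sub_pos.2 (lt_of_le_of_lt hu.2 (max_lt ha hb))).ne').intervalIntegrable

lemma integral_sub_rpow {r : ℝ} (hr : r ≠ -1) (ha : a < c) (hb : b < c) :
    ∫ u in a..b, (c - u) ^ r = ((c - a) ^ (r + 1) - (c - b) ^ (r + 1)) / (r + 1) := by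
  rw [intervalIntegral.integral_comp_sub_left (fun x => x ^ r) c,
    integral_rpow (Or.inr ⟨hr, Set.notMem_uIcc_of_lt (sub_pos.2 hb) (sub_pos.2 ha)⟩)]

lemma integral_sub_rpow_neg_one (ha : a < c) (hb : b < c) :
    ∫ u in a..b, (c - u) ^ (-1 : ℝ) = log (c - a) - log (c - b) := by
  simp only [rpow_neg_one]
  rw [intervalIntegral.integral_comp_sub_left (fun x => x⁻¹) c,
    integral_inv (Set.notMem_uIcc_of_lt (sub_pos.2 hb) (sub_pos.2 ha)),
    log_div (sub_pos.2 ha).ne' (sub_pos.2 hb).ne']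

end IntegralsOfPowersOfDistance

section DoubleIntegral

variable {T β : ℝ}

lemma integral_rpow_mul_sub_rpow (hβ : β ≠ 0) (hT : 0 < T) {s : ℝ} (hs : s < T) :
    ∫ u in (0 : ℝ)..s, (T - s) ^ (β - 1) * (T - u) ^ (-β - 1)
      = ((T - s) ^ (-1 : ℝ) - T ^ (-β) * (T - s) ^ (β - 1)) / β := by
  have hTs : 0 < T - s := sub_pos.2 hs
  rw [intervalIntegral.integral_const_mul,
    integral_sub_rpow (by contrapose! hβ; linarith) hT hs,
    show -β - 1 + 1 = -β by ring, sub_zero, show (-1 : ℝ) = (β - 1) + -β by ring,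
    rpow_add hTs]
  field_simp
  ring

lemma integral_integral_rpow_mul_sub_rpow (hβ : β ≠ 0) (hT : 0 < T) {t : ℝ} (ht : t < T) :
    ∫ s in (0 : ℝ)..t, ∫ u in (0 : ℝ)..s, (T - s) ^ (β - 1) * (T - u) ^ (-β - 1)
      = (log T - log (T - t) - (1 - ((T - t) / T) ^ β) / β) / β := by
  have hinner : Set.EqOn
      (fun s => ∫ u in (0 : ℝ)..s, (T - s) ^ (β - 1) * (T - u) ^ (-β - 1))
      (fun s => ((T - s) ^ (-1 : ℝ) - T ^ (-β) * (T - s) ^ (β - 1)) / β) (Set.uIcc 0 t) :=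
    fun s hs => integral_rpow_mul_sub_rpow hβ hT (lt_of_le_of_lt hs.2 (max_lt hT ht))
  rw [intervalIntegral.integral_congr hinner, intervalIntegral.integral_div,
    intervalIntegral.integral_sub (intervalIntegrable_sub_rpow _ hT ht)
      ((intervalIntegrable_sub_rpow _ hT ht).const_mul _),
    intervalIntegral.integral_const_mul, integral_sub_rpow_neg_one hT ht,
    integral_sub_rpow (by contrapose! hβ; linarith) hT ht,
    sub_add_cancel, sub_zero, div_rpow (sub_pos.2 ht).le hT.le, rpow_neg hT.le]
  field_simp [(rpow_pos_of_pos hT β).ne']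

end DoubleIntegral

theorem stmt_2 (T α : ℝ) (hT : 0 < T) (hα : 1 / 2 < α)
    (t : ℝ) (ht1 : max 0 (T - 1 / Real.exp 1) < t) (ht2 : t < T) :
    bfun T α t =
      1 + Real.log T / |Real.log (T - t)|
        - (1 / ((2 * α - 1) * |Real.log (T - t)|)) * (1 - ((T - t) / T) ^ (2 * α - 1)) := by
  have hβ : 2 * α - 1 ≠ 0 := by linarith
  have hlog : log (T - t) < 0 := by
    refine log_neg (by linarith) ?_
    have : 1 / exp 1 < 1 := by rw [div_lt_one (exp_pos 1)]; exact one_lt_exp_iff.2 one_pos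
    linarith [le_max_right 0 (T - 1 / exp 1)]
  have hI := integral_integral_rpow_mul_sub_rpow hβ hT ht2
  rw [show 2 * α - 1 - 1 = 2 * α - 2 by ring, show -(2 * α - 1) - 1 = -(2 * α) by ring] at hI
  rw [bfun, hI, lam, abs_of_neg hlog]
  field_simp [hlog.ne]
  ring
end

section
/- There exists a constant C > 0, depending only on α and T, such that for every t with max(0, T − 1/e) < t < T one has ‖g_t‖ ≤ C/√λ_t. -/
open MeasureTheory Real Filter Topology

/-!
Since `0 ≤ (T - max u v)^(2α-1) - (T - t)^(2α-1) ≤ (T - max u v)^(2α-1)` on `[0,t]²`, the square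
of `g_t` is dominated by `(T-u)^(-2α) (T-v)^(-2α) (T - max u v)^(4α-2) / log²(T-t)`. For fixed `u`,
the integral of this majorant over `v < u` and over `v > u` is each at most
`(T-u)⁻¹ / (2α-1)`: the exponents combine to exactly `-1`. Integrating `(T-u)⁻¹` over `[0,t]` then
gives `‖g_t‖² ≤ 2 log(T/(T-t)) / ((2α-1) log²(T-t))`, which is `O(1/λ_t)` because
`|log(T-t)| ≥ 1` for `T - t < 1/e`.
-/

theorem integral_inv_sub {T a b : ℝ} (hab : a ≤ b) (hb : b < T) :
    ∫ v in a..b, (T - v)⁻¹ = Real.log (T - a) - Real.log (T - b) := by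
  have h0 : (0 : ℝ) ∉ Set.uIcc (T - b) (T - a) := by
    rw [Set.uIcc_of_le (by linarith)]
    exact fun h => by linarith [h.1]
  rw [intervalIntegral.integral_comp_sub_left (fun x => x⁻¹) T, integral_inv h0,
    Real.log_div (by linarith) (by linarith)]

theorem integral_sub_rpow_s10 {T a b p : ℝ} (hab : a ≤ b) (hb : b < T) (hp : p ≠ -1) :
    ∫ v in a..b, (T - v) ^ p = ((T - a) ^ (p + 1) - (T - b) ^ (p + 1)) / (p + 1) := by
  have h0 : (0 : ℝ) ∉ Set.uIcc (T - b) (T - a) := by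
    rw [Set.uIcc_of_le (by linarith)]
    exact fun h => by linarith [h.1]
  rw [intervalIntegral.integral_comp_sub_left (fun x => x ^ p) T, integral_rpow (Or.inr ⟨hp, h0⟩)]

theorem integral_sub_rpow_le_of_lt_neg_one {T a b p : ℝ} (hab : a ≤ b) (hb : b < T)
    (hp : p < -1) : ∫ v in a..b, (T - v) ^ p ≤ (T - b) ^ (p + 1) / -(p + 1) := by
  rw [integral_sub_rpow_s10 hab hb hp.ne, ← neg_div_neg_eq, neg_sub]
  have : 0 ≤ (T - a) ^ (p + 1) := Real.rpow_nonneg (by linarith) _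
  gcongr <;> linarith

theorem integral_sub_rpow_le_of_neg_one_lt {T a b p : ℝ} (hab : a ≤ b) (hb : b < T)
    (hp : -1 < p) : ∫ v in a..b, (T - v) ^ p ≤ (T - a) ^ (p + 1) / (p + 1) := by
  rw [integral_sub_rpow_s10 hab hb hp.ne']
  have : 0 ≤ (T - b) ^ (p + 1) := Real.rpow_nonneg (by linarith) _
  gcongr <;> linarith

theorem setIntegral_le_intervalIntegral_of_le_on_Icc {f g : ℝ → ℝ} {s : Set ℝ} {a b : ℝ}
    (hab : a ≤ b) (hs : Set.Icc a b ⊆ s) (hf : ContinuousOn f (Set.Icc a b))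
    (hg : ∀ x, 0 ≤ g x) (hgf : ∀ x ∈ Set.Icc a b, g x ≤ f x)
    (hg_out : ∀ x ∉ Set.Icc a b, g x = 0) :
    ∫ x in s, g x ≤ ∫ x in a..b, f x := by
  have hg_le : ∀ x, g x ≤ (Set.Icc a b).indicator f x := by
    intro x
    by_cases hx : x ∈ Set.Icc a b
    · simpa [Set.indicator_of_mem hx] using hgf x hx
    · simp [Set.indicator_of_notMem hx, hg_out x hx]
  have hint : Integrable ((Set.Icc a b).indicator f) (volume.restrict s) :=
    ((hf.integrableOn_compact isCompact_Icc).integrable_indicator measurableSet_Icc).restrict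
  calc ∫ x in s, g x ≤ ∫ x in s, (Set.Icc a b).indicator f x :=
        integral_mono_of_nonneg (ae_of_all _ hg) hint (ae_of_all _ hg_le)
    _ = ∫ x in a..b, f x := by
        rw [integral_indicator measurableSet_Icc, Measure.restrict_restrict measurableSet_Icc,
          Set.inter_eq_self_of_subset_left hs, integral_Icc_eq_integral_Ioc,
          ← intervalIntegral.integral_of_le hab]

theorem gker_comm (T α t u v : ℝ) : gker T α t u v = gker T α t v u := by
  simp only [gker, max_comm u v, and_comm]
  split_ifs <;> ring

theorem gker_nonneg {T α t u v : ℝ} (hα : 1 / 2 < α) (htT : t < T) : 0 ≤ gker T α t u v := by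
  unfold gker
  split_ifs with h
  · have hm : T - t ≤ T - max u v := by linarith [max_le h.1.2 h.2.2]
    have hpow := Real.rpow_le_rpow (by linarith) hm (by linarith : (0:ℝ) ≤ 2 * α - 1)
    have hTu : 0 < T - u := by linarith [h.1.2]
    have hTv : 0 < T - v := by linarith [h.2.2]
    apply div_nonneg _ (abs_nonneg _)
    apply mul_nonneg _ (by linarith)
    positivity
  · exact le_rfl

theorem continuousOn_rpow_mul_rpow_max {T α a t u : ℝ} (hα : 1 / 2 < α) (htT : t < T) :
    ContinuousOn (fun v => (T - u) ^ (-(2 * α)) * (T - v) ^ (-(2 * α)) *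
      (T - max u v) ^ (2 * (2 * α - 1))) (Set.Icc a t) := by
  refine ContinuousOn.mul (continuousOn_const.mul ?_) ?_
  · exact ContinuousOn.rpow_const (by fun_prop) fun x hx => Or.inl (by linarith [hx.2])
  · exact ContinuousOn.rpow_const (by fun_prop) fun x _ => Or.inr (by linarith)

theorem gker_sq_le {T α t u v : ℝ} (hα : 1 / 2 < α) (htT : t < T) (hu : u ∈ Set.Icc 0 t)
    (hv : v ∈ Set.Icc 0 t) :
    gker T α t u v ^ 2 ≤ (T - u) ^ (-(2 * α)) * (T - v) ^ (-(2 * α)) *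
      (T - max u v) ^ (2 * (2 * α - 1)) / |Real.log (T - t)| ^ 2 := by
  have hTu : 0 < T - u := by linarith [hu.2]
  have hTv : 0 < T - v := by linarith [hv.2]
  have hTm : 0 < T - max u v := by linarith [max_le hu.2 hv.2]
  have sq_rpow : ∀ {x : ℝ}, 0 < x → ∀ r : ℝ, x ^ (2 * r) = (x ^ r) ^ 2 := fun hx r => by
    rw [mul_comm, ← Real.rpow_mul_natCast hx.le]; norm_num
  have hle : gker T α t u v ≤
      (T - u) ^ (-α) * (T - v) ^ (-α) * (T - max u v) ^ (2 * α - 1) / |Real.log (T - t)| := by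
    rw [gker, if_pos ⟨hu, hv⟩]
    gcongr
    exact sub_le_self _ (Real.rpow_nonneg (by linarith) _)
  calc gker T α t u v ^ 2
      ≤ ((T - u) ^ (-α) * (T - v) ^ (-α) * (T - max u v) ^ (2 * α - 1) /
          |Real.log (T - t)|) ^ 2 := pow_le_pow_left₀ (gker_nonneg hα htT) hle 2
    _ = _ := by rw [neg_mul_eq_mul_neg, sq_rpow hTu, sq_rpow hTv, sq_rpow hTm]; ring

theorem integral_rpow_mul_rpow_max_le {T α a t u : ℝ} (hα : 1 / 2 < α) (htT : t < T)
    (hu : u ∈ Set.Icc a t) :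
    ∫ v in a..t, (T - u) ^ (-(2 * α)) * (T - v) ^ (-(2 * α)) * (T - max u v) ^ (2 * (2 * α - 1))
      ≤ 2 * (T - u)⁻¹ / (2 * α - 1) := by
  have hTu : 0 < T - u := by linarith [hu.2]
  have hcont := continuousOn_rpow_mul_rpow_max (a := a) (u := u) hα htT
  rw [← intervalIntegral.integral_add_adjacent_intervals
    (hcont.mono (Set.uIcc_of_le hu.1 ▸ Set.Icc_subset_Icc_right hu.2)).intervalIntegrable
    (hcont.mono (Set.uIcc_of_le hu.2 ▸ Set.Icc_subset_Icc_left hu.1)).intervalIntegrable]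
  have below : ∫ v in a..u, (T - u) ^ (-(2 * α)) * (T - v) ^ (-(2 * α)) *
      (T - max u v) ^ (2 * (2 * α - 1)) ≤ (T - u)⁻¹ / (2 * α - 1) := by
    rw [intervalIntegral.integral_congr (g := fun v => (T - u) ^ (2 * α - 2) * (T - v) ^ (-(2 * α)))
      fun v hv => by
        rw [max_eq_left (Set.uIcc_of_le hu.1 ▸ hv).2, mul_right_comm, ← Real.rpow_add hTu]
        ring_nf,
      intervalIntegral.integral_const_mul]
    calc _ ≤ (T - u) ^ (2 * α - 2) * ((T - u) ^ (-(2 * α) + 1) / -(-(2 * α) + 1)) :=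
          mul_le_mul_of_nonneg_left
            (integral_sub_rpow_le_of_lt_neg_one hu.1 (by linarith [hu.2]) (by linarith))
            (Real.rpow_nonneg hTu.le _)
      _ = (T - u)⁻¹ / (2 * α - 1) := by
          rw [mul_div_assoc', ← Real.rpow_add hTu, ← Real.rpow_neg_one]; ring_nf
  have above : ∫ v in u..t, (T - u) ^ (-(2 * α)) * (T - v) ^ (-(2 * α)) *
      (T - max u v) ^ (2 * (2 * α - 1)) ≤ (T - u)⁻¹ / (2 * α - 1) := by
    rw [intervalIntegral.integral_congr (g := fun v => (T - u) ^ (-(2 * α)) * (T - v) ^ (2 * α - 2))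
      fun v hv => by
        have hTv : 0 < T - v := by linarith [(Set.uIcc_of_le hu.2 ▸ hv).2]
        rw [max_eq_right (Set.uIcc_of_le hu.2 ▸ hv).1, mul_assoc, ← Real.rpow_add hTv]
        ring_nf,
      intervalIntegral.integral_const_mul]
    calc _ ≤ (T - u) ^ (-(2 * α)) * ((T - u) ^ (2 * α - 2 + 1) / (2 * α - 2 + 1)) :=
          mul_le_mul_of_nonneg_left
            (integral_sub_rpow_le_of_neg_one_lt hu.2 htT (by linarith))
            (Real.rpow_nonneg hTu.le _)
      _ = (T - u)⁻¹ / (2 * α - 1) := by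
          rw [mul_div_assoc', ← Real.rpow_add hTu, ← Real.rpow_neg_one]; ring_nf
  exact (add_le_add below above).trans_eq (by ring)

theorem gker_eq_zero_of_notMem {T α t u : ℝ} (hu : u ∉ Set.Icc 0 t) (v : ℝ) :
    gker T α t u v = 0 :=
  if_neg fun h => hu h.1

theorem integral_gker_mul_self_le {T α t u : ℝ} (hα : 1 / 2 < α) (htT : t < T)
    (hu : u ∈ Set.Icc 0 t) :
    ∫ v in Set.Icc 0 T, gker T α t u v * gker T α t u v ≤
      2 * (T - u)⁻¹ / ((2 * α - 1) * |Real.log (T - t)| ^ 2) := by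
  calc ∫ v in Set.Icc 0 T, gker T α t u v * gker T α t u v
      ≤ ∫ v in (0 : ℝ)..t, (T - u) ^ (-(2 * α)) * (T - v) ^ (-(2 * α)) *
          (T - max u v) ^ (2 * (2 * α - 1)) / |Real.log (T - t)| ^ 2 :=
        setIntegral_le_intervalIntegral_of_le_on_Icc (hu.1.trans hu.2)
          (Set.Icc_subset_Icc_right htT.le)
          ((continuousOn_rpow_mul_rpow_max hα htT).div_const _)
          (fun v => mul_self_nonneg _) (fun v hv => by rw [← sq]; exact gker_sq_le hα htT hu hv)
          (fun v hv => by rw [gker_comm, gker_eq_zero_of_notMem hv, zero_mul])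
    _ = (∫ v in (0 : ℝ)..t, (T - u) ^ (-(2 * α)) * (T - v) ^ (-(2 * α)) *
          (T - max u v) ^ (2 * (2 * α - 1))) / |Real.log (T - t)| ^ 2 :=
        intervalIntegral.integral_div _ _
    _ ≤ 2 * (T - u)⁻¹ / (2 * α - 1) / |Real.log (T - t)| ^ 2 :=
        div_le_div_of_nonneg_right (integral_rpow_mul_rpow_max_le hα htT hu) (sq_nonneg _)
    _ = _ := div_div _ _ _

theorem normSq_gker_le {T α t : ℝ} (hα : 1 / 2 < α) (ht : 0 ≤ t) (htT : t < T) :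
    normSq T (gker T α t) ≤
      2 * (Real.log T - Real.log (T - t)) / ((2 * α - 1) * |Real.log (T - t)| ^ 2) := by
  set c := 2 / ((2 * α - 1) * |Real.log (T - t)| ^ 2)
  calc normSq T (gker T α t)
      = ∫ u in Set.Icc 0 T, ∫ v in Set.Icc 0 T, gker T α t u v * gker T α t u v := rfl
    _ ≤ ∫ u in (0 : ℝ)..t, c * (T - u)⁻¹ :=
        setIntegral_le_intervalIntegral_of_le_on_Icc ht (Set.Icc_subset_Icc_right htT.le)
          (continuousOn_const.mul (ContinuousOn.inv₀ (by fun_prop)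
            fun u hu => by linarith [hu.2]))
          (fun u => integral_nonneg fun v => mul_self_nonneg _)
          (fun u hu => (integral_gker_mul_self_le hα htT hu).trans_eq (by ring))
          (fun u hu => by simp only [gker_eq_zero_of_notMem hu, mul_zero, integral_zero])
    _ = _ := by
        rw [intervalIntegral.integral_const_mul, integral_inv_sub ht htT, sub_zero]; ring

theorem stmt_10_general (T α : ℝ) (hα : 1 / 2 < α) :
    ∃ C > 0, ∀ t : ℝ, max 0 (T - 1 / Real.exp 1) < t → t < T →
      Real.sqrt (normSq T (gker T α t)) ≤ C / Real.sqrt (lam T α t) := by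
  have hα' : 0 < 2 * α - 1 := by linarith
  set K := 2 * (1 + |Real.log T|) / (2 * α - 1) ^ 2 with hK
  refine ⟨Real.sqrt K, Real.sqrt_pos.mpr (by positivity), fun t ht htT => ?_⟩
  have ht0 : 0 ≤ t := (le_max_left _ _).trans ht.le
  have hlog : Real.log (T - t) ≤ -1 := by
    rw [Real.log_le_iff_le_exp (by linarith), Real.exp_neg, ← one_div]
    linarith [le_max_right 0 (T - 1 / Real.exp 1)]
  set L := |Real.log (T - t)| with hL
  have hL1 : 1 ≤ L := by rw [hL, abs_of_neg (by linarith)]; linarith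
  have hnum : Real.log T - Real.log (T - t) ≤ (1 + |Real.log T|) * L := by
    rw [hL, abs_of_neg (by linarith : Real.log (T - t) < 0)]
    nlinarith [le_abs_self (Real.log T), abs_nonneg (Real.log T)]
  have hnormSq : normSq T (gker T α t) ≤ K / lam T α t := by
    calc normSq T (gker T α t) ≤ 2 * (Real.log T - Real.log (T - t)) / ((2 * α - 1) * L ^ 2) :=
          normSq_gker_le hα ht0 htT
      _ ≤ 2 * ((1 + |Real.log T|) * L) / ((2 * α - 1) * L ^ 2) := by gcongr
      _ = K / lam T α t := by rw [lam, ← hL, hK]; field_simp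
  calc Real.sqrt (normSq T (gker T α t)) ≤ Real.sqrt (K / lam T α t) := Real.sqrt_le_sqrt hnormSq
    _ = Real.sqrt K / Real.sqrt (lam T α t) := Real.sqrt_div' _ (by unfold lam; positivity)

theorem stmt_10 (T α : ℝ) (hT : 0 < T) (hα : 1 / 2 < α) :
    ∃ C > 0, ∀ t : ℝ, max 0 (T - 1 / Real.exp 1) < t → t < T →
      Real.sqrt (normSq T (gker T α t)) ≤ C / Real.sqrt (lam T α t) :=
  stmt_10_general T α hα
end
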